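/- Let A = (a_n(i)) be a G∞-matrix satisfying (U): there exists n₀ with sup_i i^i·v_{n₀}(i) < ∞. Then for every n there exists m > n such that: (a) for every fixed j, lim_{i→∞} (v_m(i)/v_n(j))·C(i−1, j−1) = 0, and (b) sup_{i≥2} ∑_{j=1}^{i−1} (v_m(i)/v_n(j))·C(i−1, j−1) < ∞, where C(p,q) denotes the binomial coefficient. (These two conditions mean that the triangular matrix Δ with entries Δ_{ij} = (−1)^{j−1}·C(i−1,j−1) defines a continuous operator on the co-echelon space k₀(V).) -/
import Mathlib

open Filter

/-- `a` is a G∞-matrix (indices range over positive integers). -/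
def IsGinfMatrix (a : ℕ → ℕ → ℝ) : Prop :=
  (∀ n i, 0 < n → 0 < i → a n i ≤ a (n + 1) i) ∧
  (∀ n i, 0 < n → 0 < i → 1 ≤ a n i ∧ a n i ≤ a n (i + 1)) ∧
  (∀ n, 0 < n → ∃ m, n < m ∧ ∃ M : ℝ, 0 < M ∧ ∀ i, 0 < i → (a n i) ^ 2 ≤ M * a m i)

private lemma ginf_mono_n (a : ℕ → ℕ → ℝ) (hA : IsGinfMatrix a) {n k i : ℕ}
    (hn : 0 < n) (hi : 0 < i) (hnk : n ≤ k) : a n i ≤ a k i := by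
  induction k with
  | zero => exact absurd hnk (by omega)
  | succ k ih =>
    rcases Nat.lt_or_ge n (k+1) with h | h
    · exact le_trans (ih (by omega)) (hA.1 k i (by omega) hi)
    · have : n = k + 1 := by omega
      simp [this]

private lemma ginf_mono_i (a : ℕ → ℕ → ℝ) (hA : IsGinfMatrix a) {n i j : ℕ}
    (hn : 0 < n) (hi : 0 < i) (hij : i ≤ j) : a n i ≤ a n j := by
  induction j with
  | zero => exact absurd hij (by omega)
  | succ j ih =>
    rcases Nat.lt_or_ge i (j+1) with h | h
    · exact le_trans (ih (by omega)) ((hA.2.1 n j hn (by omega)).2)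
    · have : i = j + 1 := by omega
      simp [this]

private lemma ginf_one_le (a : ℕ → ℕ → ℝ) (hA : IsGinfMatrix a) {n i : ℕ}
    (hn : 0 < n) (hi : 0 < i) : 1 ≤ a n i := (hA.2.1 n i hn hi).1

private lemma two_pow_le_self_pow (i : ℕ) (hi : 1 ≤ i) : 2 ^ (i - 1) ≤ i ^ i := by
  rcases Nat.lt_or_ge i 2 with h | h
  · interval_cases i; norm_num
  · calc 2 ^ (i - 1) ≤ i ^ (i - 1) := Nat.pow_le_pow_left h _
      _ ≤ i ^ i := Nat.pow_le_pow_right (by omega) (by omega)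

private lemma choose_le_two_pow (n l : ℕ) : Nat.choose n l ≤ 2 ^ n := by
  rcases le_or_gt l n with h | h
  · calc Nat.choose n l ≤ ∑ x ∈ Finset.range (n+1), Nat.choose n x :=
        Finset.single_le_sum (fun _ _ => Nat.zero_le _) (Finset.mem_range.mpr (by omega))
      _ = 2 ^ n := Nat.sum_range_choose n
  · simp [Nat.choose_eq_zero_of_lt h]

/-- For a G∞-matrix satisfying (U) (`sup_i i^i·v_{n₀}(i) < ∞` for some `n₀`), for every `n`
there is `m > n` such that the matrix `(v_m(i)/v_n(j))·C(i−1,j−1)` has columns tending to `0`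
and uniformly summable rows; here `v n i = (a n i)⁻¹`.  (So the map `Δ` is continuous
on `k₀(V)`.) -/
theorem stmt_12 (a : ℕ → ℕ → ℝ) (hA : IsGinfMatrix a)
    (hU : ∃ n₀, 0 < n₀ ∧ ∃ C : ℝ, ∀ i : ℕ, 0 < i → (i : ℝ) ^ i * (a n₀ i)⁻¹ ≤ C) :
    ∀ n, 0 < n → ∃ m, n < m ∧
      (∀ j : ℕ, 0 < j →
        Tendsto (fun i : ℕ => (a m i)⁻¹ / (a n j)⁻¹ * (Nat.choose (i - 1) (j - 1) : ℝ))
          atTop (nhds 0)) ∧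
      (∃ C : ℝ, ∀ i : ℕ, 2 ≤ i →
        ∑ j ∈ Finset.Icc 1 (i - 1),
          (a m i)⁻¹ / (a n j)⁻¹ * (Nat.choose (i - 1) (j - 1) : ℝ) ≤ C) := by
  obtain ⟨n₀, hn₀, C, hC⟩ := hU
  intro n hn
  have hpos : ∀ {p i : ℕ}, 0 < p → 0 < i → 0 < a p i :=
    fun hp hi => lt_of_lt_of_le one_pos (ginf_one_le a hA hp hi)
  have hCpos : 0 < C := by
    have h := hC 1 one_pos
    have h1 : 0 < (a n₀ 1)⁻¹ := inv_pos.2 (hpos hn₀ one_pos)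
    nlinarith
  set k := max n n₀ with hk
  have hkpos : 0 < k := lt_of_lt_of_le hn (le_max_left _ _)
  obtain ⟨m, hkm, M, hM, hsq⟩ := hA.2.2 k hkpos
  have hnm : n < m := lt_of_le_of_lt (le_max_left _ _) hkm
  have hmpos : 0 < m := lt_trans hn hnm
  -- key : a n i * a n₀ i ≤ M * a m i
  have key : ∀ i : ℕ, 0 < i → a n i * a n₀ i ≤ M * a m i := by
    intro i hi
    have h1 : a n i ≤ a k i := ginf_mono_n a hA hn hi (le_max_left _ _)
    have h2 : a n₀ i ≤ a k i := ginf_mono_n a hA hn₀ hi (le_max_right _ _)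
    have hp1 := hpos hn hi; have hp2 := hpos hn₀ hi
    nlinarith [hsq i hi]
  -- key2 : i^i ≤ C * a n₀ i
  have key2 : ∀ i : ℕ, 0 < i → (i : ℝ) ^ i ≤ C * a n₀ i := by
    intro i hi
    have h := hC i hi
    have h0 : 0 < a n₀ i := hpos hn₀ hi
    calc (i:ℝ)^i = (i:ℝ)^i * (a n₀ i)⁻¹ * a n₀ i := by field_simp
      _ ≤ C * a n₀ i := mul_le_mul_of_nonneg_right h h0.le
  -- choose bound
  have hch : ∀ i j : ℕ, 0 < i → (Nat.choose (i-1) (j-1) : ℝ) ≤ (i:ℝ) ^ i := by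
    intro i j hi
    calc (Nat.choose (i-1) (j-1) : ℝ) ≤ ((2 ^ (i-1) : ℕ) : ℝ) := by
          exact_mod_cast choose_le_two_pow (i-1) (j-1)
      _ ≤ ((i ^ i : ℕ) : ℝ) := by exact_mod_cast two_pow_le_self_pow i hi
      _ = (i:ℝ)^i := by push_cast; ring
  refine ⟨m, hnm, ?_, ?_⟩
  · -- part (a) : columns tend to zero
    intro j hj
    have hanj : 0 < a n j := hpos hn hj
    set K := a n j * M * C * C with hK
    have hg : Tendsto (fun i : ℕ => K * ((i:ℝ)^i)⁻¹) atTop (nhds 0) := by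
      have hmono : ∀ᶠ i : ℕ in atTop, (i:ℝ) ≤ (i:ℝ)^i := by
        filter_upwards [eventually_ge_atTop 1] with i hi
        exact le_self_pow₀ (by exact_mod_cast hi) (by omega)
      have hinf : Tendsto (fun i : ℕ => (i:ℝ)^i) atTop atTop :=
        tendsto_atTop_mono' atTop hmono tendsto_natCast_atTop_atTop
      simpa using (hinf.inv_tendsto_atTop).const_mul K
    apply squeeze_zero' ?_ ?_ hg
    · filter_upwards [eventually_ge_atTop 1] with i hi
      have ham : 0 < a m i := hpos hmpos hi
      exact mul_nonneg (div_nonneg (inv_nonneg.2 ham.le) (inv_nonneg.2 hanj.le))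
        (Nat.cast_nonneg _)
    · filter_upwards [eventually_ge_atTop 1] with i hi
      have hi0 : 0 < i := hi
      have ham : 0 < a m i := hpos hmpos hi0
      have han0 : 0 < a n₀ i := hpos hn₀ hi0
      have hii : (0:ℝ) < (i:ℝ)^i := pow_pos (by exact_mod_cast hi0) i
      have h2 : a n₀ i ^ 2 ≤ M * a m i := by
        have h1 : a n₀ i ≤ a k i := ginf_mono_n a hA hn₀ hi0 (le_max_right _ _)
        nlinarith [hsq i hi0]
      have hchb : (Nat.choose (i-1) (j-1) : ℝ) ≤ C * a n₀ i := (hch i j hi0).trans (key2 i hi0)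
      have hn0i : (i:ℝ)^i ≤ C * a n₀ i := key2 i hi0
      have hch0 : (0:ℝ) ≤ (Nat.choose (i-1) (j-1) : ℝ) := Nat.cast_nonneg _
      have heq : (a m i)⁻¹ / (a n j)⁻¹ * (Nat.choose (i-1) (j-1) : ℝ)
          = (a n j * (Nat.choose (i-1) (j-1) : ℝ)) / a m i := by
        field_simp
      rw [heq, ← div_eq_mul_inv, div_le_div_iff₀ ham hii]
      have hprod : (Nat.choose (i-1) (j-1) : ℝ) * (i:ℝ)^i ≤ (C * a n₀ i) * (C * a n₀ i) :=
        mul_le_mul hchb hn0i hii.le (by positivity)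
      nlinarith [mul_le_mul_of_nonneg_left hprod hanj.le,
        mul_le_mul_of_nonneg_left h2 (by positivity : (0:ℝ) ≤ a n j * C * C)]
  · -- part (b) : rows uniformly summable
    refine ⟨C * M, fun i hi => ?_⟩
    have hi0 : 0 < i := by omega
    have ham : 0 < a m i := hpos hmpos hi0
    have han0 : 0 < a n₀ i := hpos hn₀ hi0
    have hani : 0 < a n i := hpos hn hi0
    -- sum of binomials
    have hsumch : (∑ j ∈ Finset.Icc 1 (i-1), Nat.choose (i-1) (j-1)) ≤ 2 ^ (i-1) := by
      have hIcc : Finset.Icc 1 (i-1) = Finset.Ico 1 i := by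
        rw [← Finset.Ico_add_one_right_eq_Icc]
        congr 1
        omega
      rw [hIcc, Finset.sum_Ico_eq_sum_range]
      calc (∑ l ∈ Finset.range (i-1), Nat.choose (i-1) (1 + l - 1))
          = ∑ l ∈ Finset.range (i-1), Nat.choose (i-1) l := by
            apply Finset.sum_congr rfl; intro l _; congr 1; omega
        _ ≤ ∑ l ∈ Finset.range (i-1+1), Nat.choose (i-1) l :=
            Finset.sum_le_sum_of_subset (Finset.range_subset_range.mpr (by omega))
        _ = 2 ^ (i-1) := Nat.sum_range_choose (i-1)
    -- step 1 : factor out (a m i)⁻¹ and bound a n j ≤ a n i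
    have hstep : ∑ j ∈ Finset.Icc 1 (i-1),
        (a m i)⁻¹ / (a n j)⁻¹ * (Nat.choose (i-1) (j-1) : ℝ)
        ≤ (a m i)⁻¹ * (a n i * (∑ j ∈ Finset.Icc 1 (i-1), (Nat.choose (i-1) (j-1) : ℝ))) := by
      rw [Finset.mul_sum, Finset.mul_sum]
      apply Finset.sum_le_sum
      intro j hj
      rw [Finset.mem_Icc] at hj
      have hanj : 0 < a n j := hpos hn (by omega)
      have hle : a n j ≤ a n i := ginf_mono_i a hA hn (by omega) (by omega)
      have heq : (a m i)⁻¹ / (a n j)⁻¹ * (Nat.choose (i-1) (j-1) : ℝ)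
          = (a m i)⁻¹ * (a n j * (Nat.choose (i-1) (j-1) : ℝ)) := by
        rw [div_eq_mul_inv, inv_inv]; ring
      rw [heq]
      have hch0 : (0:ℝ) ≤ (Nat.choose (i-1) (j-1) : ℝ) := Nat.cast_nonneg _
      have := inv_nonneg.2 ham.le
      gcongr
    refine hstep.trans ?_
    -- step 2 : bound the binomial sum by C * a n₀ i
    have hsum2 : (∑ j ∈ Finset.Icc 1 (i-1), (Nat.choose (i-1) (j-1) : ℝ)) ≤ C * a n₀ i := by
      calc (∑ j ∈ Finset.Icc 1 (i-1), (Nat.choose (i-1) (j-1) : ℝ))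
          = ((∑ j ∈ Finset.Icc 1 (i-1), Nat.choose (i-1) (j-1) : ℕ) : ℝ) := by push_cast; rfl
        _ ≤ ((2 ^ (i-1) : ℕ) : ℝ) := by exact_mod_cast hsumch
        _ ≤ ((i ^ i : ℕ) : ℝ) := by exact_mod_cast two_pow_le_self_pow i hi0
        _ = (i:ℝ)^i := by push_cast; ring
        _ ≤ C * a n₀ i := key2 i hi0
    calc (a m i)⁻¹ * (a n i * (∑ j ∈ Finset.Icc 1 (i-1), (Nat.choose (i-1) (j-1) : ℝ)))
        ≤ (a m i)⁻¹ * (a n i * (C * a n₀ i)) :=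
          mul_le_mul_of_nonneg_left
            (mul_le_mul_of_nonneg_left hsum2 hani.le) (inv_nonneg.2 ham.le)
      _ = (a m i)⁻¹ * (C * (a n i * a n₀ i)) := by ring
      _ ≤ (a m i)⁻¹ * (C * (M * a m i)) :=
          mul_le_mul_of_nonneg_left
            (mul_le_mul_of_nonneg_left (key i hi0) hCpos.le) (inv_nonneg.2 ham.le)
      _ = C * M * ((a m i)⁻¹ * a m i) := by ring
      _ = C * M := by rw [inv_mul_cancel₀ ham.ne', mul_one]
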